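/- arXiv:1205.3637 — 3 statements merged into one kernel-verified Lean document; each statement's English description precedes it below -/
import Mathlib

section
/- If a probability density p on ℝ has finite Fisher information I(p), then p is bounded pointwise by √(I(p)): for all x, p(x) ≤ √(I(p)). -/
/-!
Where `p` vanishes it is minimal, so `p'` vanishes too, and Cauchy–Schwarz applied to
`|p'| = √(p'² / p) · √p` gives `∫ |p'| ≤ √I · √(∫ p) = √I`; in particular `p'` is integrable.
An integrable function with integrable derivative tends to `0` at `-∞`, hence
`p x = ∫_{-∞}^x p' ≤ ∫ |p'|`.
-/

open MeasureTheory

section CauchySchwarz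

variable {α : Type*} [MeasurableSpace α] {μ : Measure α} {f g : α → ℝ}

lemma memLp_two_sqrt (hf0 : 0 ≤ᵐ[μ] f) (hf : Integrable f μ) :
    MemLp (fun a => √(f a)) 2 μ := by
  refine (memLp_two_iff_integrable_sq hf.aemeasurable.sqrt.aestronglyMeasurable).2 ?_
  refine hf.congr ?_
  filter_upwards [hf0] with a ha
  exact (Real.sq_sqrt ha).symm

lemma integrable_sqrt_mul (hf0 : 0 ≤ᵐ[μ] f) (hg0 : 0 ≤ᵐ[μ] g) (hf : Integrable f μ)
    (hg : Integrable g μ) : Integrable (fun a => √(f a * g a)) μ := by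
  refine ((memLp_two_sqrt hf0 hf).integrable_mul (memLp_two_sqrt hg0 hg)).congr ?_
  filter_upwards [hf0] with a ha
  exact (Real.sqrt_mul ha _).symm

lemma integral_sqrt_mul_le (hf0 : 0 ≤ᵐ[μ] f) (hg0 : 0 ≤ᵐ[μ] g) (hf : Integrable f μ)
    (hg : Integrable g μ) :
    ∫ a, √(f a * g a) ∂μ ≤ √(∫ a, f a ∂μ) * √(∫ a, g a ∂μ) := by
  have hsq {h : α → ℝ} (h0 : 0 ≤ᵐ[μ] h) : ∫ a, √(h a) ^ (2 : ℝ) ∂μ = ∫ a, h a ∂μ := by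
    refine integral_congr_ae ?_
    filter_upwards [h0] with a ha
    rw [Real.rpow_two, Real.sq_sqrt ha]
  have hholder := integral_mul_le_Lp_mul_Lq_of_nonneg Real.HolderConjugate.two_two
    (ae_of_all _ fun a => Real.sqrt_nonneg (f a)) (ae_of_all _ fun a => Real.sqrt_nonneg (g a))
    (by simpa using memLp_two_sqrt hf0 hf) (by simpa using memLp_two_sqrt hg0 hg)
  rw [hsq hf0, hsq hg0, ← Real.sqrt_eq_rpow, ← Real.sqrt_eq_rpow] at hholder
  refine le_of_eq_of_le (integral_congr_ae ?_) hholder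
  filter_upwards [hf0] with a ha
  exact Real.sqrt_mul ha _

end CauchySchwarz

lemma abs_eq_sqrt_sq_div_mul {a b : ℝ} (hb : b = 0 → a = 0) : |a| = √(a ^ 2 / b * b) := by
  rcases eq_or_ne b 0 with rfl | hb0
  · simp [hb rfl]
  · rw [div_mul_cancel₀ _ hb0, Real.sqrt_sq_eq_abs]

section WeightedL1

variable {α : Type*} [MeasurableSpace α] {μ : Measure α} {q w : α → ℝ}

lemma integrable_of_integrable_sq_div (hq : AEStronglyMeasurable q μ) (hw0 : ∀ a, 0 ≤ w a)
    (hqw : ∀ a, w a = 0 → q a = 0) (hw : Integrable w μ)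
    (hI : Integrable (fun a => q a ^ 2 / w a) μ) : Integrable q μ := by
  refine (integrable_norm_iff hq).1 ?_
  simp only [Real.norm_eq_abs, abs_eq_sqrt_sq_div_mul (hqw _)]
  exact integrable_sqrt_mul (ae_of_all _ fun a => div_nonneg (sq_nonneg _) (hw0 a))
    (ae_of_all _ hw0) hI hw

lemma integral_abs_le_sqrt_mul_sqrt (hw0 : ∀ a, 0 ≤ w a) (hqw : ∀ a, w a = 0 → q a = 0)
    (hw : Integrable w μ) (hI : Integrable (fun a => q a ^ 2 / w a) μ) :
    ∫ a, |q a| ∂μ ≤ √(∫ a, q a ^ 2 / w a ∂μ) * √(∫ a, w a ∂μ) := by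
  simp only [abs_eq_sqrt_sq_div_mul (hqw _)]
  exact integral_sqrt_mul_le (ae_of_all _ fun a => div_nonneg (sq_nonneg _) (hw0 a))
    (ae_of_all _ hw0) hI hw

end WeightedL1

lemma norm_le_integral_norm_of_hasDerivAt {E : Type*} [NormedAddCommGroup E] [NormedSpace ℝ E]
    [CompleteSpace E]
    {f f' : ℝ → E} (hderiv : ∀ x, HasDerivAt f (f' x) x) (hf : Integrable f)
    (hf' : Integrable f') (x : ℝ) : ‖f x‖ ≤ ∫ t, ‖f' t‖ := by
  have hlim : Filter.Tendsto f Filter.atBot (nhds 0) :=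
    tendsto_zero_of_hasDerivAt_of_integrableOn_Iic (a := x) (fun t _ => hderiv t)
      hf'.integrableOn hf.integrableOn
  have hftc : ∫ t in Set.Iic x, f' t = f x := by
    simpa using integral_Iic_of_hasDerivAt_of_tendsto' (fun t _ => hderiv t) hf'.integrableOn hlim
  calc ‖f x‖ = ‖∫ t in Set.Iic x, f' t‖ := by rw [hftc]
    _ ≤ ∫ t in Set.Iic x, ‖f' t‖ := norm_integral_le_integral_norm _
    _ ≤ ∫ t, ‖f' t‖ := setIntegral_le_integral hf'.norm (ae_of_all _ fun t => norm_nonneg _)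

theorem density_le_sqrt_fisherInformation_general
    (p p' : ℝ → ℝ)
    (hnonneg : ∀ x, 0 ≤ p x)
    (hint : Integrable p)
    (hmass : ∫ x, p x = 1)
    (hderiv : ∀ x, HasDerivAt p (p' x) x)
    (hfisher : IntegrableOn (fun x => (p' x) ^ 2 / p x) {x | 0 < p x}) :
    ∀ x, p x ≤ Real.sqrt (∫ x in {x | 0 < p x}, (p' x) ^ 2 / p x) := by
  have hp'_eq_zero (x : ℝ) (hx : p x = 0) : p' x = 0 :=
    IsLocalMin.hasDerivAt_eq_zero (Filter.Eventually.of_forall fun y => hx ▸ hnonneg y) (hderiv x)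
  -- `p' x ^ 2 / 0 = 0`, so the Fisher integrand vanishes off the support of `p`
  have hfisher_outside (x : ℝ) (hx : x ∉ {x | 0 < p x}) : p' x ^ 2 / p x = 0 := by
    simp [le_antisymm (not_lt.1 hx) (hnonneg x)]
  have hp'_meas : AEStronglyMeasurable p' := by
    rw [show p' = deriv p from funext fun x => (hderiv x).deriv.symm]
    exact (stronglyMeasurable_deriv p).aestronglyMeasurable
  have hfisher' := hfisher.integrable_of_forall_notMem_eq_zero hfisher_outside
  have hp'_int := integrable_of_integrable_sq_div hp'_meas hnonneg hp'_eq_zero hint hfisher'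
  intro x
  calc p x ≤ ‖p x‖ := Real.le_norm_self _
    _ ≤ ∫ t, |p' t| := norm_le_integral_norm_of_hasDerivAt hderiv hint hp'_int x
    _ ≤ √(∫ t, p' t ^ 2 / p t) * √(∫ t, p t) :=
      integral_abs_le_sqrt_mul_sqrt hnonneg hp'_eq_zero hint hfisher'
    _ = √(∫ t in {x | 0 < p x}, p' t ^ 2 / p t) := by
      rw [hmass, Real.sqrt_one, mul_one,
        setIntegral_eq_integral_of_forall_compl_eq_zero hfisher_outside]

/-- A probability density `p` on `ℝ` with finite Fisher information
`I(p) = ∫_{p>0} p'(x)²/p(x) dx` is bounded pointwise by `√(I(p))`. -/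
theorem density_le_sqrt_fisherInformation
    (p p' : ℝ → ℝ)
    (hnonneg : ∀ x, 0 ≤ p x)
    (hint : Integrable p)
    (hmass : ∫ x, p x = 1)
    (hderiv : ∀ x, HasDerivAt p (p' x) x)
    (hp'int : Integrable p')
    (hfisher : IntegrableOn (fun x => (p' x) ^ 2 / p x) {x | 0 < p x}) :
    ∀ x, p x ≤ Real.sqrt (∫ x in {x | 0 < p x}, (p' x) ^ 2 / p x) :=
  density_le_sqrt_fisherInformation_general p p' hnonneg hint hmass hderiv hfisher
end

section
/- If a random variable X has finite Fisher information I(X), then its characteristic function satisfies |f(t)| ≤ √(I(X))/|t| for all t ≠ 0. -/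
/-!
Integrating by parts against `e^{itx}` gives `it f(t) = -∫ e^{itx} p'(x) dx`, so
`|t| |f(t)| ≤ ∫ |p'|`. By Cauchy–Schwarz applied to `|p'| = (|p'| / √p) · √p`,
`∫ |p'| ≤ √(∫ p'² / p) · √(∫ p) = √I(X)`.
-/

open MeasureTheory

section CauchySchwarz

variable {α : Type*} [MeasurableSpace α] {μ : Measure α}

theorem integral_mul_le_sqrt_integral_sq_mul_sqrt_integral_sq {f g : α → ℝ}
    (hf_nonneg : 0 ≤ᵐ[μ] f) (hg_nonneg : 0 ≤ᵐ[μ] g) (hf : MemLp f 2 μ) (hg : MemLp g 2 μ) :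
    ∫ x, f x * g x ∂μ ≤ √(∫ x, f x ^ 2 ∂μ) * √(∫ x, g x ^ 2 ∂μ) := by
  have := integral_mul_le_Lp_mul_Lq_of_nonneg .two_two hf_nonneg hg_nonneg
    (by simpa using hf) (by simpa using hg)
  simpa only [Real.rpow_two, Real.sqrt_eq_rpow] using this

/-- On `{p = 0}` both sides of `|p'| = (|p'| / √p) * √p` vanish, since `p'` does there and
`p' ^ 2 / 0 = 0` in Lean. -/
theorem integral_abs_le_sqrt_integral_sq_div_mul_sqrt_integral {p p' : α → ℝ}
    (hnonneg : ∀ x, 0 ≤ p x) (hint : Integrable p μ) (hp' : AEStronglyMeasurable p' μ)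
    (hzero : ∀ x, p x = 0 → p' x = 0) (hfisher : Integrable (fun x => p' x ^ 2 / p x) μ) :
    ∫ x, |p' x| ∂μ ≤ √(∫ x, p' x ^ 2 / p x ∂μ) * √(∫ x, p x ∂μ) := by
  set f : α → ℝ := fun x => |p' x| / √(p x)
  set g : α → ℝ := fun x => √(p x)
  have hfg : ∀ x, f x * g x = |p' x| := by
    intro x
    rcases (hnonneg x).eq_or_lt with hpx | hpx
    · simp [f, g, ← hpx, hzero x hpx.symm]
    · exact div_mul_cancel₀ _ (Real.sqrt_pos.2 hpx).ne'
  have hf_sq : ∀ x, f x ^ 2 = p' x ^ 2 / p x := fun x => by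
    simp only [f, div_pow, Real.sq_sqrt (hnonneg x), sq_abs]
  have hg_sq : ∀ x, g x ^ 2 = p x := fun x => Real.sq_sqrt (hnonneg x)
  have hg_meas : AEStronglyMeasurable g μ := hint.1.aemeasurable.sqrt.aestronglyMeasurable
  have hf_meas : AEStronglyMeasurable f μ :=
    (hp'.aemeasurable.abs.div hint.1.aemeasurable.sqrt).aestronglyMeasurable
  have hf : MemLp f 2 μ :=
    (memLp_two_iff_integrable_sq hf_meas).2 (by simpa only [hf_sq] using hfisher)
  have hg : MemLp g 2 μ :=
    (memLp_two_iff_integrable_sq hg_meas).2 (by simpa only [hg_sq] using hint)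
  have := integral_mul_le_sqrt_integral_sq_mul_sqrt_integral_sq
    (.of_forall fun x => by positivity) (.of_forall fun x => by positivity) hf hg
  simpa only [hfg, hf_sq, hg_sq] using this

end CauchySchwarz

theorem HasDerivAt.eq_zero_of_nonneg_of_eq_zero {p : ℝ → ℝ} {d x : ℝ} (hp : HasDerivAt p d x)
    (hnonneg : ∀ y, 0 ≤ p y) (hx : p x = 0) : d = 0 :=
  IsLocalMin.hasDerivAt_eq_zero (.of_forall fun y => hx ▸ hnonneg y) hp

theorem integral_abs_deriv_le_sqrt_fisherInformation {p p' : ℝ → ℝ}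
    (hnonneg : ∀ x, 0 ≤ p x) (hint : Integrable p) (hmass : ∫ x, p x = 1)
    (hderiv : ∀ x, HasDerivAt p (p' x) x) (hp'int : Integrable p')
    (hfisher : IntegrableOn (fun x => p' x ^ 2 / p x) {x | 0 < p x}) :
    ∫ x, |p' x| ≤ √(∫ x in {x | 0 < p x}, p' x ^ 2 / p x) := by
  have hoff : ∀ x ∉ {x | 0 < p x}, p' x ^ 2 / p x = 0 := fun x hx => by
    simp [le_antisymm (not_lt.1 hx) (hnonneg x)]
  rw [setIntegral_eq_integral_of_forall_compl_eq_zero hoff]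
  simpa only [hmass, Real.sqrt_one, mul_one] using
    integral_abs_le_sqrt_integral_sq_div_mul_sqrt_integral hnonneg hint hp'int.1
      (fun x => (hderiv x).eq_zero_of_nonneg_of_eq_zero hnonneg)
      (hfisher.integrable_of_forall_notMem_eq_zero hoff)

/-- The boundary terms of the integration by parts vanish because `q` and `q'` are integrable. -/
theorem integral_exp_mul_deriv {q q' : ℝ → ℂ} (hderiv : ∀ x, HasDerivAt q (q' x) x)
    (hq : Integrable q) (hq' : Integrable q') (t : ℝ) :
    ∫ x : ℝ, Complex.exp (Complex.I * (t * x)) * q' x =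
      -(Complex.I * t) * ∫ x : ℝ, Complex.exp (Complex.I * (t * x)) * q x := by
  set e : ℝ → ℂ := fun x => Complex.exp (Complex.I * (t * x))
  have he_deriv : ∀ x, HasDerivAt e (e x * (Complex.I * t)) x := fun x => by
    simpa using (((hasDerivAt_id (x : ℂ)).const_mul (t : ℂ)).const_mul Complex.I).cexp.comp_ofReal
  have he_meas : AEStronglyMeasurable e := by fun_prop
  have he_norm : ∀ᵐ x, ‖e x‖ ≤ 1 := .of_forall fun x => by
    simp [e, Complex.norm_exp, mul_comm Complex.I]
  have heq : Integrable (fun x => e x * q x) := hq.bdd_mul he_meas he_norm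
  have he'q : Integrable (fun x => e x * (Complex.I * t) * q x) :=
    (heq.const_mul (Complex.I * t)).congr (.of_forall fun x => by ring)
  rw [integral_mul_deriv_eq_deriv_mul_of_integrable (fun x _ => he_deriv x) (fun x _ => hderiv x)
    (hq'.bdd_mul he_meas he_norm) he'q heq]
  rw [neg_mul, ← integral_const_mul]
  congr 2 with x
  ring

/-- If a random variable `X` has an absolutely continuous density
with finite Fisher information `I(X)`, then its characteristic function
`f(t) = E e^{itX}` satisfies `|f(t)| ≤ √(I(X)) / |t|` for every `t ≠ 0`. -/
theorem charFun_le_sqrt_fisherInformation_div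
    (p p' : ℝ → ℝ)
    (hnonneg : ∀ x, 0 ≤ p x)
    (hint : Integrable p)
    (hmass : ∫ x, p x = 1)
    (hderiv : ∀ x, HasDerivAt p (p' x) x)
    (hp'int : Integrable p')
    (hfisher : IntegrableOn (fun x => (p' x) ^ 2 / p x) {x | 0 < p x}) :
    ∀ t : ℝ, t ≠ 0 →
      ‖∫ x : ℝ, Complex.exp (Complex.I * (t * x)) * (p x : ℂ)‖ ≤
        Real.sqrt (∫ x in {x | 0 < p x}, (p' x) ^ 2 / p x) / |t| := by
  intro t ht
  have hparts := integral_exp_mul_deriv (fun x => (hderiv x).ofReal_comp) hint.ofReal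
    hp'int.ofReal t
  rw [le_div_iff₀ (abs_pos.2 ht)]
  calc ‖∫ x : ℝ, Complex.exp (Complex.I * (t * x)) * (p x : ℂ)‖ * |t|
      = ‖∫ x : ℝ, Complex.exp (Complex.I * (t * x)) * (p' x : ℂ)‖ := by
        rw [hparts, norm_mul, norm_neg, norm_mul, Complex.norm_I, one_mul, Complex.norm_real,
          Real.norm_eq_abs, mul_comm]
    _ ≤ ∫ x, |p' x| := (norm_integral_le_integral_norm _).trans_eq (by simp [Complex.norm_exp])
    _ ≤ _ := integral_abs_deriv_le_sqrt_fisherInformation hnonneg hint hmass hderiv hp'int hfisher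
end

section
/- Let p = p₁ * p₂ be a convolution of two absolutely continuous probability densities each with Fisher information at most I. Then for all x ∈ ℝ, |p'(x)| ≤ I^{3/4} √(p(x)) ≤ I. -/
/-!
Write `p₁' = u √p₁` with the score `u = p₁' / √p₁`, so that `∫ u² = I(p₁)`. Cauchy–Schwarz
against the weight `p₂(y)` gives
`|p'(x)|² ≤ (∫ u(x - y)² p₂(y) dy) (∫ p₁(x - y) p₂(y) dy) ≤ (sup p₂) I p(x)`.
For a single density `q`, the same inequality gives `q(x) ≤ ∫ |q'| = ∫ |u| √q ≤ √I(q)`,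
so `sup p₂ ≤ √I` and `p(x) ≤ sup p₂ ≤ √I`; both bounds follow.
-/

open MeasureTheory

section CauchySchwarz

variable {α : Type*} [MeasurableSpace α] {μ : Measure α} {f g w : α → ℝ}

theorem abs_integral_mul_le_sqrt_mul_sqrt (hf : MemLp f 2 μ) (hg : MemLp g 2 μ) :
    |∫ a, f a * g a ∂μ| ≤ √(∫ a, f a ^ 2 ∂μ) * √(∫ a, g a ^ 2 ∂μ) := by
  have hpq : (2 : ℝ).HolderConjugate 2 :=
    (Real.holderConjugate_iff_eq_conjExponent one_lt_two).2 (by norm_num)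
  have h2 : ENNReal.ofReal 2 = 2 := by norm_num
  calc |∫ a, f a * g a ∂μ| ≤ ∫ a, |f a| * |g a| ∂μ := by
        simpa only [abs_mul] using abs_integral_le_integral_abs (f := fun a => f a * g a)
    _ ≤ (∫ a, |f a| ^ (2 : ℝ) ∂μ) ^ (1 / (2 : ℝ)) * (∫ a, |g a| ^ (2 : ℝ) ∂μ) ^ (1 / (2 : ℝ)) :=
        integral_mul_le_Lp_mul_Lq_of_nonneg hpq (ae_of_all _ fun _ => abs_nonneg _)
          (ae_of_all _ fun _ => abs_nonneg _) (h2 ▸ hf.abs) (h2 ▸ hg.abs)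
    _ = √(∫ a, f a ^ 2 ∂μ) * √(∫ a, g a ^ 2 ∂μ) := by
        simp only [Real.rpow_two, sq_abs, Real.sqrt_eq_rpow, one_div]

theorem abs_integral_mul_mul_le_sqrt_mul_sqrt (hw : ∀ a, 0 ≤ w a)
    (hf : AEStronglyMeasurable f μ) (hg : AEStronglyMeasurable g μ)
    (hwm : AEStronglyMeasurable w μ) (hfw : Integrable (fun a => f a ^ 2 * w a) μ)
    (hgw : Integrable (fun a => g a ^ 2 * w a) μ) :
    |∫ a, f a * g a * w a ∂μ| ≤ √(∫ a, f a ^ 2 * w a ∂μ) * √(∫ a, g a ^ 2 * w a ∂μ) := by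
  have hsq : ∀ (h : α → ℝ) a, (h a * √(w a)) ^ 2 = h a ^ 2 * w a := fun h a => by
    rw [mul_pow, Real.sq_sqrt (hw a)]
  have hmemLp : ∀ h : α → ℝ, AEStronglyMeasurable h μ →
      Integrable (fun a => h a ^ 2 * w a) μ → MemLp (fun a => h a * √(w a)) 2 μ :=
    fun h hm hi => (memLp_two_iff_integrable_sq
      (hm.mul (Real.continuous_sqrt.comp_aestronglyMeasurable hwm))).2
        (by simpa only [Pi.mul_apply, hsq] using hi)
  have hcs := abs_integral_mul_le_sqrt_mul_sqrt (hmemLp f hf hfw) (hmemLp g hg hgw)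
  simp only [hsq] at hcs
  convert hcs using 4 with a
  rw [mul_mul_mul_comm, Real.mul_self_sqrt (hw a)]

end CauchySchwarz

section Score

variable {q q' : ℝ → ℝ}

theorem measurable_of_forall_hasDerivAt (hd : ∀ x, HasDerivAt q (q' x) x) : Measurable q' :=
  funext (fun x => (hd x).deriv) ▸ measurable_deriv q

theorem continuous_of_forall_hasDerivAt (hd : ∀ x, HasDerivAt q (q' x) x) : Continuous q :=
  continuous_iff_continuousAt.2 fun x => (hd x).continuousAt

noncomputable def fisherInfo (q q' : ℝ → ℝ) : ℝ :=
  ∫ x in {x | 0 < q x}, q' x ^ 2 / q x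

/-- The score `q' / √q`; where `q x = 0` it takes the junk value `q' x / 0 = 0`. -/
noncomputable def score (q q' : ℝ → ℝ) (x : ℝ) : ℝ :=
  q' x / √(q x)

theorem score_sq {x : ℝ} (hq : 0 ≤ q x) : score q q' x ^ 2 = q' x ^ 2 / q x := by
  rw [score, div_pow, Real.sq_sqrt hq]

theorem score_mul_sqrt (hq : ∀ y, 0 ≤ q y) {x : ℝ} (hd : HasDerivAt q (q' x) x) :
    score q q' x * √(q x) = q' x := by
  rcases (hq x).eq_or_lt with hx | hx
  · have hq'x : q' x = 0 :=
      IsLocalMin.hasDerivAt_eq_zero (Filter.Eventually.of_forall fun y => hx ▸ hq y) hd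
    simp [score, hq'x]
  · exact div_mul_cancel₀ _ (Real.sqrt_ne_zero'.2 hx)

theorem measurable_score (hd : ∀ x, HasDerivAt q (q' x) x) : Measurable (score q q') :=
  (measurable_of_forall_hasDerivAt hd).div
    (Real.continuous_sqrt.comp (continuous_of_forall_hasDerivAt hd)).measurable

theorem integrable_score_sq (hq : ∀ x, 0 ≤ q x)
    (hfisher : IntegrableOn (fun x => q' x ^ 2 / q x) {x | 0 < q x}) :
    Integrable (fun x => score q q' x ^ 2) := by
  simp only [score_sq (hq _)]
  exact hfisher.integrable_of_forall_notMem_eq_zero fun x hx => by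
    simp [le_antisymm (not_lt.1 hx) (hq x)]

theorem integral_score_sq (hq : ∀ x, 0 ≤ q x) : ∫ x, score q q' x ^ 2 = fisherInfo q q' := by
  simp only [score_sq (hq _), fisherInfo]
  exact (setIntegral_eq_integral_of_forall_compl_eq_zero fun x hx => by
    simp [le_antisymm (not_lt.1 hx) (hq x)]).symm

theorem memLp_score (hq : ∀ x, 0 ≤ q x) (hd : ∀ x, HasDerivAt q (q' x) x)
    (hfisher : IntegrableOn (fun x => q' x ^ 2 / q x) {x | 0 < q x}) :
    MemLp (score q q') 2 :=
  (memLp_two_iff_integrable_sq (measurable_score hd).aestronglyMeasurable).2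
    (integrable_score_sq hq hfisher)

theorem memLp_sqrt (hq : ∀ x, 0 ≤ q x) (hc : Continuous q) (hint : Integrable q) :
    MemLp (fun x => √(q x)) 2 :=
  (memLp_two_iff_integrable_sq hc.sqrt.aestronglyMeasurable).2
    (by simpa only [Real.sq_sqrt (hq _)] using hint)

theorem integrable_deriv (hq : ∀ x, 0 ≤ q x) (hint : Integrable q)
    (hd : ∀ x, HasDerivAt q (q' x) x)
    (hfisher : IntegrableOn (fun x => q' x ^ 2 / q x) {x | 0 < q x}) : Integrable q' := by
  have h := (memLp_score hq hd hfisher).integrable_mul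
    (memLp_sqrt hq (continuous_of_forall_hasDerivAt hd) hint)
  exact h.congr (Filter.Eventually.of_forall fun x => score_mul_sqrt hq (hd x))

theorem apply_le_integral_abs_deriv (hd : ∀ x, HasDerivAt q (q' x) x) (hint : Integrable q)
    (hint' : Integrable q') (x : ℝ) : q x ≤ ∫ y, |q' y| := by
  have hlim := tendsto_zero_of_hasDerivAt_of_integrableOn_Iic (a := x) (fun y _ => hd y)
    hint'.integrableOn hint.integrableOn
  have hftc := integral_Iic_of_hasDerivAt_of_tendsto' (a := x) (fun y _ => hd y)
    hint'.integrableOn hlim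
  rw [sub_zero] at hftc
  calc q x ≤ |∫ y in Set.Iic x, q' y| := hftc ▸ le_abs_self _
    _ ≤ ∫ y in Set.Iic x, |q' y| := abs_integral_le_integral_abs
    _ ≤ ∫ y, |q' y| := setIntegral_le_integral hint'.abs (ae_of_all _ fun _ => abs_nonneg _)

theorem integral_abs_deriv_le (hq : ∀ x, 0 ≤ q x) (hint : Integrable q)
    (hd : ∀ x, HasDerivAt q (q' x) x)
    (hfisher : IntegrableOn (fun x => q' x ^ 2 / q x) {x | 0 < q x}) :
    ∫ x, |q' x| ≤ √(fisherInfo q q') * √(∫ x, q x) := by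
  have hcs := abs_integral_mul_le_sqrt_mul_sqrt (memLp_score hq hd hfisher).abs
    (memLp_sqrt hq (continuous_of_forall_hasDerivAt hd) hint)
  simp only [Pi.abs_apply, sq_abs, Real.sq_sqrt (hq _), integral_score_sq hq] at hcs
  calc ∫ x, |q' x| = |∫ x, |score q q' x| * √(q x)| := by
        rw [abs_of_nonneg (integral_nonneg fun x => by positivity)]
        simp only [← score_mul_sqrt hq (hd _), abs_mul, abs_of_nonneg (Real.sqrt_nonneg _)]
    _ ≤ _ := hcs

theorem apply_le_sqrt_of_fisherInfo_le {I : ℝ} (hq : ∀ x, 0 ≤ q x) (hint : Integrable q)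
    (hmass : ∫ x, q x = 1) (hd : ∀ x, HasDerivAt q (q' x) x)
    (hfisher : IntegrableOn (fun x => q' x ^ 2 / q x) {x | 0 < q x}) (hI : fisherInfo q q' ≤ I)
    (x : ℝ) : q x ≤ √I :=
  calc q x ≤ ∫ y, |q' y| :=
        apply_le_integral_abs_deriv hd hint (integrable_deriv hq hint hd hfisher) x
    _ ≤ √(fisherInfo q q') * √(∫ x, q x) := integral_abs_deriv_le hq hint hd hfisher
    _ ≤ √I := by rw [hmass, Real.sqrt_one, mul_one]; exact Real.sqrt_le_sqrt hI

end Score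

section Convolution

variable {q₁ q₁' q₂ : ℝ → ℝ} {M : ℝ}

theorem integral_conv_le (h₁ : ∀ x, 0 ≤ q₁ x) (h₁int : Integrable q₁) (h₁mass : ∫ x, q₁ x = 1)
    (h₂ : ∀ y, 0 ≤ q₂ y) (h₂M : ∀ y, q₂ y ≤ M) (x : ℝ) : ∫ y, q₁ (x - y) * q₂ y ≤ M :=
  calc ∫ y, q₁ (x - y) * q₂ y ≤ ∫ y, q₁ (x - y) * M :=
        integral_mono_of_nonneg (ae_of_all _ fun y => mul_nonneg (h₁ _) (h₂ y))
          ((h₁int.comp_sub_left x).mul_const M)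
          (ae_of_all _ fun y => mul_le_mul_of_nonneg_left (h₂M y) (h₁ _))
    _ = M := by rw [integral_mul_const, integral_sub_left_eq_self q₁ volume x, h₁mass, one_mul]

theorem abs_integral_deriv_conv_le (h₁ : ∀ x, 0 ≤ q₁ x) (h₁int : Integrable q₁)
    (h₁d : ∀ x, HasDerivAt q₁ (q₁' x) x)
    (h₁fisher : IntegrableOn (fun x => q₁' x ^ 2 / q₁ x) {x | 0 < q₁ x})
    (h₂ : ∀ y, 0 ≤ q₂ y) (h₂m : Measurable q₂) (h₂M : ∀ y, q₂ y ≤ M) (x : ℝ) :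
    |∫ y, q₁' (x - y) * q₂ y| ≤ √(M * fisherInfo q₁ q₁') * √(∫ y, q₁ (x - y) * q₂ y) := by
  have hq₂bdd : ∀ᵐ y, ‖q₂ y‖ ≤ M :=
    ae_of_all _ fun y => (Real.norm_of_nonneg (h₂ y)).trans_le (h₂M y)
  have hu := (integrable_score_sq h₁ h₁fisher).comp_sub_left x
  have hfw : Integrable fun y => score q₁ q₁' (x - y) ^ 2 * q₂ y :=
    hu.mul_bdd h₂m.aestronglyMeasurable hq₂bdd
  have hgw : Integrable fun y => √(q₁ (x - y)) ^ 2 * q₂ y := by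
    simpa only [Real.sq_sqrt (h₁ _)] using
      (h₁int.comp_sub_left x).mul_bdd h₂m.aestronglyMeasurable hq₂bdd
  have hfw_le : ∫ y, score q₁ q₁' (x - y) ^ 2 * q₂ y ≤ M * fisherInfo q₁ q₁' :=
    calc ∫ y, score q₁ q₁' (x - y) ^ 2 * q₂ y ≤ ∫ y, M * score q₁ q₁' (x - y) ^ 2 :=
          integral_mono hfw (hu.const_mul M) fun y => by
            rw [mul_comm]; exact mul_le_mul_of_nonneg_right (h₂M y) (sq_nonneg _)
      _ = M * fisherInfo q₁ q₁' := by
          rw [integral_const_mul, integral_sub_left_eq_self (fun z => score q₁ q₁' z ^ 2) volume x,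
            integral_score_sq h₁]
  have hcs := abs_integral_mul_mul_le_sqrt_mul_sqrt (f := fun y => score q₁ q₁' (x - y))
    (g := fun y => √(q₁ (x - y))) h₂
    ((measurable_score h₁d).comp (measurable_const.sub measurable_id)).aestronglyMeasurable
    ((continuous_of_forall_hasDerivAt h₁d).comp
      (continuous_const.sub continuous_id)).sqrt.aestronglyMeasurable
    h₂m.aestronglyMeasurable hfw hgw
  simp only [score_mul_sqrt h₁ (h₁d _), Real.sq_sqrt (h₁ _)] at hcs
  exact hcs.trans (by gcongr)

end Convolution

/-- Let `p = p₁ * p₂` be the convolution of two absolutely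
continuous probability densities, each with Fisher information at most `I`.
Then for all `x`, `|p'(x)| ≤ I^{3/4} √(p(x)) ≤ I`. -/
theorem deriv_bound_conv_two_densities
    (p₁ p₁' p₂ p₂' p p' : ℝ → ℝ) (I : ℝ)
    (h₁nonneg : ∀ x, 0 ≤ p₁ x) (h₁int : Integrable p₁) (h₁mass : ∫ x, p₁ x = 1)
    (h₂nonneg : ∀ x, 0 ≤ p₂ x) (h₂int : Integrable p₂) (h₂mass : ∫ x, p₂ x = 1)
    (h₁deriv : ∀ x, HasDerivAt p₁ (p₁' x) x)
    (h₂deriv : ∀ x, HasDerivAt p₂ (p₂' x) x)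
    (h₁fisher : IntegrableOn (fun x => (p₁' x) ^ 2 / p₁ x) {x | 0 < p₁ x})
    (h₂fisher : IntegrableOn (fun x => (p₂' x) ^ 2 / p₂ x) {x | 0 < p₂ x})
    (h₁I : ∫ x in {x | 0 < p₁ x}, (p₁' x) ^ 2 / p₁ x ≤ I)
    (h₂I : ∫ x in {x | 0 < p₂ x}, (p₂' x) ^ 2 / p₂ x ≤ I)
    (hp : ∀ x, p x = ∫ y, p₁ (x - y) * p₂ y)
    (hp' : ∀ x, p' x = ∫ y, p₁' (x - y) * p₂ y) :
    ∀ x, |p' x| ≤ I ^ ((3 : ℝ) / 4) * Real.sqrt (p x) ∧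
      I ^ ((3 : ℝ) / 4) * Real.sqrt (p x) ≤ I := by
  have hI : 0 ≤ I := (integral_nonneg fun x => div_nonneg (sq_nonneg _) (h₁nonneg x)).trans h₁I
  have hp₂le : ∀ y, p₂ y ≤ √I :=
    apply_le_sqrt_of_fisherInfo_le h₂nonneg h₂int h₂mass h₂deriv h₂fisher h₂I
  have hp₂m : Measurable p₂ := (continuous_of_forall_hasDerivAt h₂deriv).measurable
  intro x
  have hpx : p x ≤ √I := hp x ▸ integral_conv_le h₁nonneg h₁int h₁mass h₂nonneg hp₂le x
  constructor
  · calc |p' x| ≤ √(√I * fisherInfo p₁ p₁') * √(p x) := by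
          rw [hp' x, hp x]
          exact abs_integral_deriv_conv_le h₁nonneg h₁int h₁deriv h₁fisher h₂nonneg hp₂m hp₂le x
      _ ≤ √(√I * I) * √(p x) := by gcongr; exact h₁I
      _ = I ^ ((3 : ℝ) / 4) * √(p x) := by
          rw [Real.sqrt_eq_rpow, Real.sqrt_eq_rpow I, ← Real.rpow_add_one' hI (by norm_num),
            ← Real.rpow_mul hI]
          norm_num
  · calc I ^ ((3 : ℝ) / 4) * √(p x) ≤ I ^ ((3 : ℝ) / 4) * √(√I) := by gcongr
      _ = I := by
          rw [Real.sqrt_eq_rpow, Real.sqrt_eq_rpow, ← Real.rpow_mul hI,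
            ← Real.rpow_add' hI (by norm_num)]
          norm_num
end
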